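/- arXiv:1310.1169 — 2 statements merged into one kernel-verified Lean document; each statement's English description precedes it below -/
import Mathlib

section
/- Let u : (0,∞) → [0,∞) be locally integrable with U(t) = ∫₀ᵗ u > 0 for all t > 0, and let v : (0,∞) → [0,∞) be measurable. Define σ(t) = ess sup_{s ∈ (0,t)} U(s) · ess sup_{τ ∈ (s,∞)} v(τ)/U(τ). Then σ(t) ≈ ess sup_{s ∈ (0,∞)} v(s) · U(t)/(U(s) + U(t)), with absolute constants in the equivalence. -/
open MeasureTheory Set Filter Topology ENNReal

/-!
The equivalence is the two-sided estimate `b / (a + b) ≤ min a b / a ≤ 2 b / (a + b)` applied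
with `a = U(τ)`, `b = U(t)`, so that `min a b = U(min τ t)`. For the upper bound it suffices that
`U(s) ≤ U(min τ t)` whenever `s < t` and `s < τ`. For the lower bound one needs
`U(min τ t) v(τ) / U(τ) ≤ σ(t)` for a.e. `τ`: monotonicity of `U` and antitonicity of the tail
suprema give `U(s) · ess sup_{τ > q} v/U ≤ σ(t)` for every `0 < s < q ≤ t`, hence
`U(s) v(τ)/U(τ) ≤ σ(t)` outside a null set simultaneously for all rational `q < min τ t`, and
left-continuity of the primitive `U` lets `s` increase to `min τ t`.
-/

namespace ENNReal

theorem div_add_le_min_div {a b : ℝ≥0∞} (ha₀ : a ≠ 0) (ha : a ≠ ∞) :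
    b / (a + b) ≤ min a b / a := by
  rcases le_total a b with hab | hba
  · rw [min_eq_left hab, ENNReal.div_self ha₀ ha]
    exact ENNReal.div_le_of_le_mul (by rw [one_mul]; exact le_add_self)
  · rw [min_eq_right hba]
    exact ENNReal.div_le_div_left le_self_add b

theorem min_div_le_two_mul_div_add {a b : ℝ≥0∞} (ha₀ : a ≠ 0) (ha : a ≠ ∞) (hb : b ≠ ∞) :
    min a b / a ≤ 2 * (b / (a + b)) := by
  have hab₀ : a + b ≠ 0 := by simp [ha₀]
  have hab : a + b ≠ ∞ := ENNReal.add_ne_top.mpr ⟨ha, hb⟩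
  rw [ENNReal.div_le_iff ha₀ ha, ← mul_div_assoc, mul_comm, ← mul_div_assoc,
    ENNReal.le_div_iff_mul_le (Or.inl hab₀) (Or.inl hab), mul_add]
  calc min a b * a + min a b * b ≤ b * a + a * b := by gcongr <;> simp
    _ = a * (2 * b) := by ring

end ENNReal

theorem exists_mem_Ioo_of_ae_restrict_Ioo {p : ℝ → Prop} {a b c d : ℝ}
    (h : ∀ᵐ x ∂volume.restrict (Ioo a b), p x) (hac : a ≤ c) (hcd : c < d) (hdb : d ≤ b) :
    ∃ x ∈ Ioo c d, p x := by
  have hne : (ae (volume.restrict (Ioo c d))).NeBot := by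
    rw [ae_neBot, Ne, Measure.restrict_eq_zero, Real.volume_Ioo, ENNReal.ofReal_eq_zero, not_le,
      sub_pos]
    exact hcd
  have h' := ae_restrict_of_ae_restrict_of_subset (Ioo_subset_Ioo hac hdb) h
  exact (h'.and (ae_restrict_mem measurableSet_Ioo)).exists.imp fun x hx => ⟨hx.2, hx.1⟩

noncomputable def tailEssSup (g : ℝ → ℝ≥0∞) (s : ℝ) : ℝ≥0∞ :=
  essSup g (volume.restrict (Ioi s))

theorem antitone_tailEssSup (g : ℝ → ℝ≥0∞) : Antitone (tailEssSup g) := fun _ _ hab =>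
  essSup_mono_measure (Measure.absolutelyContinuous_of_le
    (Measure.restrict_mono (Ioi_subset_Ioi hab) le_rfl))

/-- The paper's `σ(t)`, with `E = U` and `f = v`. -/
noncomputable def sigma (E f : ℝ → ℝ≥0∞) (t : ℝ) : ℝ≥0∞ :=
  essSup (fun s => E s * tailEssSup (fun τ => f τ / E τ) s) (volume.restrict (Ioo 0 t))

theorem ContinuousWithinAt.mul_le_of_forall_Ioo {E : ℝ → ℝ≥0∞} {p q : ℝ} {a L : ℝ≥0∞}
    (hE : ContinuousWithinAt E (Iio q) q) (hpq : p < q) (hq : E q ≠ 0)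
    (h : ∀ s ∈ Ioo p q, E s * a ≤ L) : E q * a ≤ L :=
  le_of_tendsto (ENNReal.Tendsto.mul_const hE (Or.inl hq))
    (eventually_of_mem (Ioo_mem_nhdsLT hpq) h)

section Sigma

variable {E f : ℝ → ℝ≥0∞} {t : ℝ}

theorem mul_tailEssSup_le_sigma (hE : Monotone E) {s q : ℝ} (hs : 0 < s) (hsq : s < q)
    (hqt : q ≤ t) : E s * tailEssSup (fun τ => f τ / E τ) q ≤ sigma E f t := by
  obtain ⟨x, hx, hxσ⟩ := exists_mem_Ioo_of_ae_restrict_Ioo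
    (ENNReal.ae_le_essSup fun s => E s * tailEssSup (fun τ => f τ / E τ) s) hs.le hsq hqt
  calc E s * tailEssSup (fun τ => f τ / E τ) q
      ≤ E x * tailEssSup (fun τ => f τ / E τ) x :=
        mul_le_mul' (hE hx.1.le) (antitone_tailEssSup _ hx.2.le)
    _ ≤ sigma E f t := hxσ

theorem ae_mul_div_le_sigma (hE : Monotone E) {q : ℝ} (hqt : q ≤ t) :
    ∀ᵐ τ, q < τ → ∀ s ∈ Ioo 0 q, E s * (f τ / E τ) ≤ sigma E f t := by
  filter_upwards [ae_imp_of_ae_restrict (ENNReal.ae_le_essSup (fun τ => f τ / E τ)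
    (μ := volume.restrict (Ioi q)))] with τ hτ hqτ s hs
  exact (mul_le_mul_right (hτ hqτ) _).trans (mul_tailEssSup_le_sigma hE hs.1 hs.2 hqt)

theorem ae_min_mul_div_le_sigma (hE : Monotone E)
    (hE₀ : ∀ s, 0 < s → E s ≠ 0) (hEl : ∀ q, 0 < q → ContinuousWithinAt E (Iio q) q)
    (ht : 0 < t) : ∀ᵐ τ, 0 < τ → E (min τ t) * (f τ / E τ) ≤ sigma E f t := by
  have hrat : ∀ᵐ τ, ∀ q : {q : ℚ // (q : ℝ) ≤ t}, (q : ℝ) < τ →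
      ∀ s ∈ Ioo 0 (q : ℝ), E s * (f τ / E τ) ≤ sigma E f t :=
    ae_all_iff.mpr fun q => ae_mul_div_le_sigma hE q.2
  filter_upwards [hrat] with τ hτ hτ₀
  have hm : 0 < min τ t := lt_min hτ₀ ht
  refine (hEl _ hm).mul_le_of_forall_Ioo hm (hE₀ _ hm) fun s hs => ?_
  obtain ⟨q, hsq, hqm⟩ := exists_rat_btwn hs.2
  exact hτ ⟨q, (hqm.trans_le (min_le_right _ _)).le⟩ (hqm.trans_le (min_le_left _ _)) s ⟨hs.1, hsq⟩

variable (hE : Monotone E) (hE₀ : ∀ s, 0 < s → E s ≠ 0) (hE_top : ∀ s, E s ≠ ∞)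
include hE hE₀ hE_top

theorem essSup_mul_div_add_le_sigma (hEl : ∀ q, 0 < q → ContinuousWithinAt E (Iio q) q)
    (ht : 0 < t) :
    essSup (fun τ => f τ * E t / (E τ + E t)) (volume.restrict (Ioi 0)) ≤ sigma E f t := by
  refine essSup_le_of_ae_le _ ?_
  filter_upwards [ae_restrict_of_ae (ae_min_mul_div_le_sigma (f := f) hE hE₀ hEl ht),
    ae_restrict_mem measurableSet_Ioi] with τ hτσ hτ
  calc f τ * E t / (E τ + E t) = f τ * (E t / (E τ + E t)) := mul_div_assoc _ _ _
    _ ≤ f τ * (min (E τ) (E t) / E τ) :=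
        mul_le_mul_right (div_add_le_min_div (hE₀ τ hτ) (hE_top τ)) _
    _ = E (min τ t) * (f τ / E τ) := by
        rw [hE.map_min]; simp only [div_eq_mul_inv]; ring
    _ ≤ sigma E f t := hτσ hτ

theorem sigma_le_two_mul_essSup_mul_div_add :
    sigma E f t ≤ 2 * essSup (fun τ => f τ * E t / (E τ + E t)) (volume.restrict (Ioi 0)) := by
  refine essSup_le_of_ae_le _ ?_
  filter_upwards [ae_restrict_mem measurableSet_Ioo] with s hs
  have hpt : ∀ τ ∈ Ioi s, E s * (f τ / E τ) ≤ 2 * (f τ * E t / (E τ + E t)) := fun τ hτ => by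
    have hτ₀ : 0 < τ := hs.1.trans hτ
    calc E s * (f τ / E τ) ≤ E (min τ t) * (f τ / E τ) :=
          mul_le_mul_left (hE (le_min hτ.le hs.2.le)) _
      _ = f τ * (min (E τ) (E t) / E τ) := by
          rw [hE.map_min]; simp only [div_eq_mul_inv]; ring
      _ ≤ f τ * (2 * (E t / (E τ + E t))) :=
          mul_le_mul_right (min_div_le_two_mul_div_add (hE₀ τ hτ₀) (hE_top τ) (hE_top t)) _
      _ = 2 * (f τ * E t / (E τ + E t)) := by rw [mul_div_assoc]; ring
  calc E s * tailEssSup (fun τ => f τ / E τ) s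
      = essSup (fun τ => E s * (f τ / E τ)) (volume.restrict (Ioi s)) :=
        ENNReal.essSup_const_mul.symm
    _ ≤ essSup (fun τ => 2 * (f τ * E t / (E τ + E t))) (volume.restrict (Ioi s)) :=
        essSup_mono_ae ((ae_restrict_mem measurableSet_Ioi).mono hpt)
    _ = 2 * tailEssSup (fun τ => f τ * E t / (E τ + E t)) s := ENNReal.essSup_const_mul
    _ ≤ 2 * tailEssSup (fun τ => f τ * E t / (E τ + E t)) 0 := by
        gcongr; exact antitone_tailEssSup _ hs.1.le

end Sigma

section Primitive

variable {u : ℝ → ℝ} (hu : ∀ t > (0 : ℝ), IntegrableOn u (Ioc 0 t))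
include hu

theorem monotone_setIntegral_Ioc_zero (hu₀ : ∀ x, 0 ≤ u x) :
    Monotone fun s => ∫ x in Ioc (0 : ℝ) s, u x := by
  intro a b hab
  dsimp only
  rcases le_or_gt a 0 with ha | ha
  · rw [Ioc_eq_empty ha.not_gt, Measure.restrict_empty, integral_zero_measure]
    exact setIntegral_nonneg measurableSet_Ioc fun x _ => hu₀ x
  · exact setIntegral_mono_set (hu b (ha.trans_le hab)) (Eventually.of_forall hu₀)
      (Ioc_subset_Ioc le_rfl hab).eventuallyLE

theorem continuousWithinAt_Iio_setIntegral_Ioc_zero {q : ℝ} (hq : 0 < q) :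
    ContinuousWithinAt (fun s => ∫ x in Ioc (0 : ℝ) s, u x) (Iio q) q :=
  ContinuousWithinAt.mono_of_mem_nhdsWithin
    (intervalIntegral.continuousOn_primitive
      ((integrableOn_Icc_iff_integrableOn_Ioc).mpr (hu q hq)) q ⟨hq.le, le_rfl⟩)
    (mem_of_superset (Ioo_mem_nhdsLT hq) Ioo_subset_Icc_self)

end Primitive

theorem sigma_equiv :
    ∃ c₁ > (0 : ℝ), ∃ c₂ > (0 : ℝ), ∀ u v : ℝ → ℝ,
      Measurable u → (∀ x, 0 ≤ u x) → Measurable v → (∀ x, 0 ≤ v x) →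
      (∀ t > (0 : ℝ), IntegrableOn u (Ioc (0 : ℝ) t)) →
      (∀ t > (0 : ℝ), 0 < ∫ s in Ioc (0 : ℝ) t, u s) →
      ∀ t > (0 : ℝ),
        ENNReal.ofReal c₁ *
          essSup (fun s => ENNReal.ofReal (v s) *
              ENNReal.ofReal (∫ x in Ioc (0 : ℝ) t, u x) /
              (ENNReal.ofReal (∫ x in Ioc (0 : ℝ) s, u x) +
                ENNReal.ofReal (∫ x in Ioc (0 : ℝ) t, u x)))
            (volume.restrict (Ioi (0 : ℝ)))
          ≤ essSup (fun s => ENNReal.ofReal (∫ x in Ioc (0 : ℝ) s, u x) *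
              essSup (fun τ => ENNReal.ofReal (v τ) /
                  ENNReal.ofReal (∫ x in Ioc (0 : ℝ) τ, u x))
                (volume.restrict (Ioi s)))
              (volume.restrict (Ioo (0 : ℝ) t)) ∧
        essSup (fun s => ENNReal.ofReal (∫ x in Ioc (0 : ℝ) s, u x) *
            essSup (fun τ => ENNReal.ofReal (v τ) /
                ENNReal.ofReal (∫ x in Ioc (0 : ℝ) τ, u x))
              (volume.restrict (Ioi s)))
            (volume.restrict (Ioo (0 : ℝ) t))
          ≤ ENNReal.ofReal c₂ *
            essSup (fun s => ENNReal.ofReal (v s) *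
                ENNReal.ofReal (∫ x in Ioc (0 : ℝ) t, u x) /
                (ENNReal.ofReal (∫ x in Ioc (0 : ℝ) s, u x) +
                  ENNReal.ofReal (∫ x in Ioc (0 : ℝ) t, u x)))
              (volume.restrict (Ioi (0 : ℝ))) := by
  refine ⟨1, one_pos, 2, two_pos, fun u v _ hu₀ _ _ hu hpos t ht => ?_⟩
  have hE : Monotone fun s => ENNReal.ofReal (∫ x in Ioc (0 : ℝ) s, u x) :=
    ENNReal.ofReal_mono.comp (monotone_setIntegral_Ioc_zero hu hu₀)
  have hE₀ (s : ℝ) (hs : 0 < s) : ENNReal.ofReal (∫ x in Ioc (0 : ℝ) s, u x) ≠ 0 :=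
    (ENNReal.ofReal_pos.mpr (hpos s hs)).ne'
  have hEl (q : ℝ) (hq : 0 < q) :
      ContinuousWithinAt (fun s => ENNReal.ofReal (∫ x in Ioc (0 : ℝ) s, u x)) (Iio q) q :=
    ENNReal.continuous_ofReal.continuousAt.comp_continuousWithinAt
      (continuousWithinAt_Iio_setIntegral_Ioc_zero hu hq)
  have hE_top (s : ℝ) : ENNReal.ofReal (∫ x in Ioc (0 : ℝ) s, u x) ≠ ∞ := ENNReal.ofReal_ne_top
  rw [ENNReal.ofReal_one, one_mul, ENNReal.ofReal_ofNat]
  have lower := essSup_mul_div_add_le_sigma (f := fun s => ENNReal.ofReal (v s))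
    hE hE₀ hE_top hEl ht
  have upper := sigma_le_two_mul_essSup_mul_div_add (f := fun s => ENNReal.ofReal (v s)) (t := t)
    hE hE₀ hE_top
  exact ⟨lower, upper⟩
end

section
/- Let 1 < p < ∞, p' = p/(p-1). Define for t > 0: ζ(t) = t f**(t) + Ψ_p(t) ( ∫ₜ^∞ (s f**(s)/Ψ_p(s)^p)^{1/(p-1)} f*(s) ds )^{1/p'} and ζ₁(t) = Ψ_p(t) ( ∫ₜ^∞ (s f**(s)/Ψ_p(s)^p)^{p'} ψ(s)^p ds )^{1/p'}. Then ζ(t) ≈ ζ₁(t) for all t > 0, with constants depending only on p, under the assumptions Ψ_p(t) ∈ (0,∞), Ψ_p(∞) = ∞, and lim_{s→∞} (s f**(s))^{p'} Ψ_p(s)^{-p'} = 0. -/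
/-!
Write `F(s) = s f**(s) = ∫₀ˢ f*`, `G = Ψ_p ^ p` and `q = 1/(p-1)`, so that `p' = q + 1`.
Both `F` and `G` are absolutely continuous, and the product rule gives, almost everywhere,
`(F^(q+1) G^(-q))' = (q+1) (F/G)^q f* - q (F/G)^(q+1) ψ^p`.
Integrating over `(t, ∞)` and using `F^(q+1) G^(-q) → 0` yields the exact identity
`q ∫ₜ^∞ (F/G)^(q+1) ψ^p = F(t)^(q+1) G(t)^(-q) + (q+1) ∫ₜ^∞ (F/G)^q f*`.
Writing it as `q C = A + (q+1) B`, the relation `Ψ_p(t) (F(t)^(q+1) G(t)^(-q))^(1/p') = F(t)`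
shows `ζ = Ψ_p(t) (A^(1/p') + B^(1/p'))` and `ζ₁ = Ψ_p(t) C^(1/p')`; since `x ↦ x^(1/p')` is
monotone and subadditive, the two are comparable.
-/

open MeasureTheory Set Filter Topology

namespace AbsolutelyContinuousOnInterval

variable {X Y : Type*} [PseudoMetricSpace X] [PseudoMetricSpace Y] {a b : ℝ}

theorem congr {f g : ℝ → X} (hf : AbsolutelyContinuousOnInterval f a b)
    (hfg : EqOn f g (uIcc a b)) : AbsolutelyContinuousOnInterval g a b := by
  refine hf.congr' ?_
  rw [EventuallyEq, eventually_inf_principal]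
  filter_upwards with E hE
  refine Finset.sum_congr rfl fun i hi => ?_
  rw [hfg (hE.1 i hi).1, hfg (hE.1 i hi).2]

theorem _root_.LipschitzOnWith.comp_absolutelyContinuousOnInterval {φ : X → Y} {f : ℝ → X}
    {K : NNReal} {s : Set X} (hφ : LipschitzOnWith K φ s)
    (hf : AbsolutelyContinuousOnInterval f a b) (hfs : MapsTo f (uIcc a b) s) :
    AbsolutelyContinuousOnInterval (φ ∘ f) a b := by
  unfold AbsolutelyContinuousOnInterval at hf ⊢
  refine squeeze_zero' (Eventually.of_forall fun _ => Finset.sum_nonneg fun _ _ => dist_nonneg)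
    ?_ (by simpa using hf.const_mul (K : ℝ))
  rw [eventually_inf_principal]
  filter_upwards with E hE
  rw [Finset.mul_sum]
  gcongr with i hi
  exact hφ.dist_le_mul _ (hfs (hE.1 i hi).1) _ (hfs (hE.1 i hi).2)

theorem _root_.ContDiffOn.comp_absolutelyContinuousOnInterval {E F : Type*}
    [NormedAddCommGroup E] [NormedSpace ℝ E] [NormedAddCommGroup F] [NormedSpace ℝ F]
    {φ : E → F} {f : ℝ → E} {s : Set E} (hφ : ContDiffOn ℝ 1 φ s) (hs : Convex ℝ s)
    (hf : AbsolutelyContinuousOnInterval f a b) (hfs : MapsTo f (uIcc a b) s) :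
    AbsolutelyContinuousOnInterval (fun x => φ (f x)) a b := by
  obtain ⟨K, hK⟩ := ((hφ.locallyLipschitzOn hs).mono hfs.image_subset
    ).exists_lipschitzOnWith_of_compact (isCompact_uIcc.image_of_continuousOn hf.continuousOn)
  exact hK.comp_absolutelyContinuousOnInterval hf (mapsTo_image f _)

end AbsolutelyContinuousOnInterval

theorem absolutelyContinuousOnInterval_integral_Ioc {f : ℝ → ℝ} {a b : ℝ} (ha : 0 ≤ a)
    (hab : a ≤ b) (hf : IntegrableOn f (Ioc 0 b)) :
    AbsolutelyContinuousOnInterval (fun x => ∫ τ in Ioc 0 x, f τ) a b := by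
  have hP := ((intervalIntegrable_iff_integrableOn_Ioc_of_le (ha.trans hab)).2 hf
    ).absolutelyContinuousOnInterval_intervalIntegral left_mem_uIcc
  refine (hP.mono ?_).congr fun x hx => ?_
  · exact uIcc_subset_uIcc (mem_uIcc_of_le ha hab) right_mem_uIcc
  · rw [uIcc_of_le hab] at hx
    exact intervalIntegral.integral_of_le (ha.trans hx.1)

theorem ae_hasDerivAt_integral_Ioc {f : ℝ → ℝ} {a b : ℝ} (ha : 0 < a) (hab : a ≤ b)
    (hf : IntegrableOn f (Ioc 0 b)) :
    ∀ᵐ x, x ∈ uIcc a b → HasDerivAt (fun x => ∫ τ in Ioc 0 x, f τ) (f x) x := by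
  have hP := ((intervalIntegrable_iff_integrableOn_Ioc_of_le (ha.le.trans hab)).2 hf
    ).ae_hasDerivAt_integral
  filter_upwards [hP] with x hx hxab
  rw [uIcc_of_le hab] at hxab
  have hx0 : 0 < x := ha.trans_le hxab.1
  refine (hx (uIcc_subset_uIcc (mem_uIcc_of_le ha.le hab) right_mem_uIcc
    (by rwa [uIcc_of_le hab])) 0 left_mem_uIcc).congr_of_eventuallyEq ?_
  filter_upwards [Ioi_mem_nhds hx0] with y hy
  exact (intervalIntegral.integral_of_le (μ := volume) hy.le).symm

theorem hasDerivAt_rpow_mul_rpow_neg {F G : ℝ → ℝ} {f g q x : ℝ} (hq : 0 ≤ q)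
    (hF : HasDerivAt F f x) (hG : HasDerivAt G g x) (hF0 : 0 ≤ F x) (hG0 : 0 < G x) :
    HasDerivAt (fun y => F y ^ (q + 1) * G y ^ (-q))
      ((q + 1) * ((F x / G x) ^ q * f) - q * ((F x / G x) ^ (q + 1) * g)) x := by
  refine ((hF.rpow_const (p := q + 1) (Or.inr (by linarith))).mul
    (hG.rpow_const (p := -q) (Or.inl hG0.ne'))).congr_deriv ?_
  rw [add_sub_cancel_right, show -q - 1 = -(q + 1) by ring, Real.rpow_neg hG0.le,
    Real.rpow_neg hG0.le, Real.div_rpow hF0 hG0.le, Real.div_rpow hF0 hG0.le,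
    Real.rpow_add_one hG0.ne']
  field_simp
  ring

theorem intervalIntegral_ratio_rpow_eq_sub {F G f g : ℝ → ℝ} {q a b : ℝ} (hq : 0 ≤ q)
    (hF : AbsolutelyContinuousOnInterval F a b) (hG : AbsolutelyContinuousOnInterval G a b)
    (hF' : ∀ᵐ x, x ∈ uIcc a b → HasDerivAt F (f x) x)
    (hG' : ∀ᵐ x, x ∈ uIcc a b → HasDerivAt G (g x) x)
    (hF0 : ∀ x ∈ uIcc a b, 0 ≤ F x) (hG0 : ∀ x ∈ uIcc a b, 0 < G x) :
    ∫ x in a..b, ((q + 1) * ((F x / G x) ^ q * f x) - q * ((F x / G x) ^ (q + 1) * g x))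
      = F b ^ (q + 1) * G b ^ (-q) - F a ^ (q + 1) * G a ^ (-q) := by
  have hFr : AbsolutelyContinuousOnInterval (fun x => F x ^ (q + 1)) a b :=
    (Real.contDiff_rpow_const_of_le (n := 1) (by simp; linarith)).contDiffOn
      |>.comp_absolutelyContinuousOnInterval convex_univ hF (mapsTo_univ _ _)
  have hGq : AbsolutelyContinuousOnInterval (fun x => G x ^ (-q)) a b :=
    ContDiffOn.comp_absolutelyContinuousOnInterval (φ := fun y => y ^ (-q)) (s := Ioi 0)
      (fun y hy => (Real.contDiffAt_rpow_const_of_ne (ne_of_gt hy)).contDiffWithinAt)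
      (convex_Ioi 0) hG hG0
  have hΦ : AbsolutelyContinuousOnInterval (fun x => F x ^ (q + 1) * G x ^ (-q)) a b :=
    hFr.fun_mul hGq
  rw [← hΦ.integral_deriv_eq_sub]
  refine intervalIntegral.integral_congr_ae ?_
  filter_upwards [hF', hG'] with x hFx hGx hx
  have hx' := uIoc_subset_uIcc hx
  exact (hasDerivAt_rpow_mul_rpow_neg hq (hFx hx') (hGx hx') (hF0 x hx') (hG0 x hx')).deriv.symm

theorem integral_Ioi_ratio_rpow_eq {F G f g : ℝ → ℝ} {q a : ℝ} (hq : 0 ≤ q)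
    (hF : ∀ b ≥ a, AbsolutelyContinuousOnInterval F a b)
    (hG : ∀ b ≥ a, AbsolutelyContinuousOnInterval G a b)
    (hF' : ∀ b ≥ a, ∀ᵐ x, x ∈ uIcc a b → HasDerivAt F (f x) x)
    (hG' : ∀ b ≥ a, ∀ᵐ x, x ∈ uIcc a b → HasDerivAt G (g x) x)
    (hF0 : ∀ x ≥ a, 0 ≤ F x) (hG0 : ∀ x ≥ a, 0 < G x)
    (hf : IntegrableOn (fun x => (F x / G x) ^ q * f x) (Ioi a))
    (hg : IntegrableOn (fun x => (F x / G x) ^ (q + 1) * g x) (Ioi a))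
    (hlim : Tendsto (fun x => F x ^ (q + 1) * G x ^ (-q)) atTop (𝓝 0)) :
    q * ∫ x in Ioi a, (F x / G x) ^ (q + 1) * g x
      = F a ^ (q + 1) * G a ^ (-q) + (q + 1) * ∫ x in Ioi a, (F x / G x) ^ q * f x := by
  have hparts : ∀ b ≥ a, (q + 1) * (∫ x in a..b, (F x / G x) ^ q * f x)
      - q * (∫ x in a..b, (F x / G x) ^ (q + 1) * g x)
      = F b ^ (q + 1) * G b ^ (-q) - F a ^ (q + 1) * G a ^ (-q) := by
    intro b hab
    have hmem : ∀ x ∈ uIcc a b, a ≤ x := fun x hx => by rw [uIcc_of_le hab] at hx; exact hx.1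
    rw [← intervalIntegral_ratio_rpow_eq_sub hq (hF b hab) (hG b hab) (hF' b hab) (hG' b hab)
      (fun x hx => hF0 x (hmem x hx)) (fun x hx => hG0 x (hmem x hx)),
      intervalIntegral.integral_sub, intervalIntegral.integral_const_mul,
      intervalIntegral.integral_const_mul]
    all_goals refine ((intervalIntegrable_iff_integrableOn_Ioc_of_le hab).2 ?_).const_mul _
    exacts [hf.mono_set Ioc_subset_Ioi_self, hg.mono_set Ioc_subset_Ioi_self]
  have hlhs := ((intervalIntegral_tendsto_integral_Ioi a hf tendsto_id).const_mul (q + 1)).sub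
    ((intervalIntegral_tendsto_integral_Ioi a hg tendsto_id).const_mul q)
  have hrhs := hlim.sub_const (F a ^ (q + 1) * G a ^ (-q))
  have := tendsto_nhds_unique (hlhs.congr' (eventually_ge_atTop a |>.mono hparts)) hrhs
  linarith

theorem rpow_equiv_of_mul_eq_add {A B C q e : ℝ} (hA : 0 ≤ A) (hB : 0 ≤ B) (hq : 0 < q)
    (he : 0 < e) (he1 : e ≤ 1) (h : q * C = A + (q + 1) * B) :
    (q / (q + 1)) ^ e * C ^ e ≤ A ^ e + B ^ e ∧ A ^ e + B ^ e ≤ 2 * q ^ e * C ^ e := by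
  have hC : 0 ≤ C := by nlinarith
  constructor
  · have hCAB : q / (q + 1) * C ≤ A + B := by
      rw [div_mul_eq_mul_div, div_le_iff₀ (by linarith)]
      nlinarith
    calc (q / (q + 1)) ^ e * C ^ e = (q / (q + 1) * C) ^ e := by
          rw [Real.mul_rpow (by positivity) hC]
      _ ≤ (A + B) ^ e := by gcongr
      _ ≤ A ^ e + B ^ e := Real.rpow_add_le_add_rpow hA hB he.le he1
  · have hAC : A ^ e ≤ (q * C) ^ e := by gcongr; nlinarith
    have hBC : B ^ e ≤ (q * C) ^ e := by gcongr; nlinarith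
    rw [Real.mul_rpow hq.le hC] at hAC hBC
    linarith

theorem rpow_one_div_mul_rpow_eq {x y p : ℝ} (hp : 1 < p) (hx : 0 ≤ x) (hy : 0 < y) :
    y ^ (1 / p) * (x ^ (1 / (p - 1) + 1) * y ^ (-(1 / (p - 1)))) ^ ((p - 1) / p) = x := by
  have hp1 : p - 1 ≠ 0 := by linarith
  have hp0 : p ≠ 0 := by linarith
  rw [Real.mul_rpow (by positivity) (by positivity), ← Real.rpow_mul hx, ← Real.rpow_mul hy.le,
    show (1 / (p - 1) + 1) * ((p - 1) / p) = 1 by field_simp; ring,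
    show -(1 / (p - 1)) * ((p - 1) / p) = -(1 / p) by field_simp, Real.rpow_one,
    Real.rpow_neg hy.le]
  field_simp

theorem rpow_one_div_mul_rpow_equiv {x y B C p : ℝ} (hp : 1 < p) (hx : 0 ≤ x) (hy : 0 < y)
    (hB : 0 ≤ B)
    (h : 1 / (p - 1) * C = x ^ (1 / (p - 1) + 1) * y ^ (-(1 / (p - 1))) + (1 / (p - 1) + 1) * B) :
    (1 / (p - 1) / (1 / (p - 1) + 1)) ^ ((p - 1) / p) * (y ^ (1 / p) * C ^ ((p - 1) / p))
        ≤ x + y ^ (1 / p) * B ^ ((p - 1) / p) ∧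
      x + y ^ (1 / p) * B ^ ((p - 1) / p)
        ≤ 2 * (1 / (p - 1)) ^ ((p - 1) / p) * (y ^ (1 / p) * C ^ ((p - 1) / p)) := by
  have hp1 : 0 < p - 1 := by linarith
  obtain ⟨hlow, hup⟩ := rpow_equiv_of_mul_eq_add (e := (p - 1) / p)
    (mul_nonneg (Real.rpow_nonneg hx _) (Real.rpow_nonneg hy.le _)) hB (by positivity)
    (by positivity) (by rw [div_le_one (by linarith)]; linarith) h
  have hy' : 0 ≤ y ^ (1 / p) := Real.rpow_nonneg hy.le _
  rw [← rpow_one_div_mul_rpow_eq hp hx hy]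
  constructor
  · calc _ = y ^ (1 / p) * (_ * _) := by ring
      _ ≤ y ^ (1 / p) * (_ + _) := mul_le_mul_of_nonneg_left hlow hy'
      _ = _ := by ring
  · calc _ = y ^ (1 / p) * (_ + _) := by ring
      _ ≤ y ^ (1 / p) * (_ * _) := mul_le_mul_of_nonneg_left hup hy'
      _ = _ := by ring

theorem zeta_equiv (p : ℝ) (hp : 1 < p) :
    ∃ c₁ > (0 : ℝ), ∃ c₂ > (0 : ℝ), ∀ ψ fs : ℝ → ℝ,
      Measurable ψ → (∀ x, 0 ≤ ψ x) →
      (∀ x ∈ Ioi (0 : ℝ), 0 ≤ fs x) → AntitoneOn fs (Ioi (0 : ℝ)) →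
      (∀ t > (0 : ℝ), IntegrableOn fs (Ioc (0 : ℝ) t)) →
      (∀ t > (0 : ℝ), IntegrableOn (fun x => ψ x ^ p) (Ioc (0 : ℝ) t)) →
      (∀ t > (0 : ℝ), 0 < ∫ x in Ioc (0 : ℝ) t, ψ x ^ p) →
      Filter.Tendsto (fun s => ∫ x in Ioc (0 : ℝ) s, ψ x ^ p)
        Filter.atTop Filter.atTop →
      Filter.Tendsto
        (fun s => (∫ τ in Ioc (0 : ℝ) s, fs τ) ^ (p / (p - 1)) *
          (∫ x in Ioc (0 : ℝ) s, ψ x ^ p) ^ (-(1 / (p - 1))))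
        Filter.atTop (nhds 0) →
      (∀ t > (0 : ℝ), IntegrableOn
        (fun s => ((∫ τ in Ioc (0 : ℝ) s, fs τ) / (∫ x in Ioc (0 : ℝ) s, ψ x ^ p))
          ^ (1 / (p - 1)) * fs s) (Ioi t)) →
      (∀ t > (0 : ℝ), IntegrableOn
        (fun s => ((∫ τ in Ioc (0 : ℝ) s, fs τ) / (∫ x in Ioc (0 : ℝ) s, ψ x ^ p))
          ^ (p / (p - 1)) * ψ s ^ p) (Ioi t)) →
      ∀ t > (0 : ℝ),
        -- ζ(t) = t f**(t) + Ψ_p(t) (∫ₜ^∞ (s f**(s)/Ψ_p(s)^p)^{1/(p-1)} f*(s) ds)^{1/p'}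
        -- ζ₁(t) = Ψ_p(t) (∫ₜ^∞ (s f**(s)/Ψ_p(s)^p)^{p'} ψ(s)^p ds)^{1/p'},  ζ ≈ ζ₁
        (c₁ * ((∫ x in Ioc (0 : ℝ) t, ψ x ^ p) ^ (1 / p) *
            (∫ s in Ioi t, ((∫ τ in Ioc (0 : ℝ) s, fs τ) / (∫ x in Ioc (0 : ℝ) s, ψ x ^ p))
              ^ (p / (p - 1)) * ψ s ^ p) ^ ((p - 1) / p))
          ≤ (∫ τ in Ioc (0 : ℝ) t, fs τ) +
            (∫ x in Ioc (0 : ℝ) t, ψ x ^ p) ^ (1 / p) *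
              (∫ s in Ioi t, ((∫ τ in Ioc (0 : ℝ) s, fs τ) / (∫ x in Ioc (0 : ℝ) s, ψ x ^ p))
                ^ (1 / (p - 1)) * fs s) ^ ((p - 1) / p)) ∧
        ((∫ τ in Ioc (0 : ℝ) t, fs τ) +
            (∫ x in Ioc (0 : ℝ) t, ψ x ^ p) ^ (1 / p) *
              (∫ s in Ioi t, ((∫ τ in Ioc (0 : ℝ) s, fs τ) / (∫ x in Ioc (0 : ℝ) s, ψ x ^ p))
                ^ (1 / (p - 1)) * fs s) ^ ((p - 1) / p)
          ≤ c₂ * ((∫ x in Ioc (0 : ℝ) t, ψ x ^ p) ^ (1 / p) *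
              (∫ s in Ioi t, ((∫ τ in Ioc (0 : ℝ) s, fs τ) / (∫ x in Ioc (0 : ℝ) s, ψ x ^ p))
                ^ (p / (p - 1)) * ψ s ^ p) ^ ((p - 1) / p))) := by
  have hp1 : 0 < p - 1 := by linarith
  rw [show p / (p - 1) = 1 / (p - 1) + 1 by field_simp; ring]
  refine ⟨(1 / (p - 1) / (1 / (p - 1) + 1)) ^ ((p - 1) / p), by positivity,
    2 * (1 / (p - 1)) ^ ((p - 1) / p), by positivity, ?_⟩
  intro ψ fs _ _ hfs _ hfsint hψint hGpos _ hlim hI₁ hI₂ t ht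
  have hF0 : ∀ x ≥ t, 0 ≤ ∫ τ in Ioc 0 x, fs τ := fun x _ =>
    setIntegral_nonneg measurableSet_Ioc fun y hy => hfs y hy.1
  have hG0 : ∀ x ≥ t, 0 < ∫ τ in Ioc 0 x, ψ τ ^ p := fun x hx => hGpos x (ht.trans_le hx)
  have hparts := integral_Ioi_ratio_rpow_eq (by positivity)
    (fun b hb => absolutelyContinuousOnInterval_integral_Ioc ht.le hb (hfsint b (ht.trans_le hb)))
    (fun b hb => absolutelyContinuousOnInterval_integral_Ioc ht.le hb (hψint b (ht.trans_le hb)))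
    (fun b hb => ae_hasDerivAt_integral_Ioc ht hb (hfsint b (ht.trans_le hb)))
    (fun b hb => ae_hasDerivAt_integral_Ioc ht hb (hψint b (ht.trans_le hb)))
    hF0 hG0 (hI₁ t ht) (hI₂ t ht) hlim
  have hI₁0 : 0 ≤ ∫ s in Ioi t, ((∫ τ in Ioc 0 s, fs τ) / (∫ x in Ioc 0 s, ψ x ^ p))
      ^ (1 / (p - 1)) * fs s :=
    setIntegral_nonneg measurableSet_Ioi fun s hs => mul_nonneg
      (Real.rpow_nonneg (div_nonneg (hF0 s hs.le) (hG0 s hs.le).le) _) (hfs s (ht.trans hs))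
  exact rpow_one_div_mul_rpow_equiv hp (hF0 t le_rfl) (hG0 t le_rfl) hI₁0 hparts
end
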